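/- arXiv:2303.01889 — 4 statements merged into one kernel-verified Lean document; each statement's English description precedes it below -/
import Mathlib

section
/- Optimal background field inequality: let ρ : [0,L]^{d−1} × ℝ → [ρ₋, ρ₊] be measurable with ρ₊ > ρ₋ > 0, write ρ = ρ₋ χ + ρ₊(1 − χ) for χ : [0,L]^{d−1} × ℝ → [0,1], let s(z) be the transverse average of χ, and let ρ̃(z) = ( L^{−(d−1)} ∫_{[0,L]^{d−1}} ρ(y,z)^{−1} dy )^{−1} be the harmonic-mean background field. Then (ρ₊ − ρ₋)^{−1} ⨍ (ρ − ρ̃)²/ρ dx ≤ ∫_ℝ F(s(z)) dz, where F(s) = (ρ₊ − ρ₋) s(1 − s) / (ρ₊ s + ρ₋(1 − s)). Moreover, equality holds if and only if ρ(x) ∈ {ρ₋, ρ₊} for almost every x. -/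
open MeasureTheory Filter Real

noncomputable section

namespace RT

/-- Points of the strip `[0,L]^{d-1} × ℝ`: `x = (y, z)` with `d' = d - 1`
transverse coordinates `y` and a vertical coordinate `z`. -/
abbrev Pt (d' : ℕ) := (Fin d' → ℝ) × ℝ

/-- The transverse box `[0,L]^{d-1}`. -/
def box (d' : ℕ) (L : ℝ) : Set (Fin d' → ℝ) := Set.univ.pi fun _ => Set.Icc 0 L

/-- The strip `[0,L]^{d-1} × ℝ`. -/
def strip (d' : ℕ) (L : ℝ) : Set (Pt d') := (box d' L) ×ˢ (Set.univ : Set ℝ)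

/-- The normalized integral `⨍ f dx = ∫_ℝ L^{-(d-1)} ∫_{[0,L]^{d-1}} f(y,z) dy dz`. -/
def nint (d' : ℕ) (L : ℝ) (f : Pt d' → ℝ) : ℝ :=
  (L ^ d')⁻¹ * ∫ x in strip d' L, f x

/-- Transverse average `f̄(z)`. -/
def tavg (d' : ℕ) (L : ℝ) (f : Pt d' → ℝ) (z : ℝ) : ℝ :=
  (L ^ d')⁻¹ * ∫ y in box d' L, f (y, z)

/-- Euclidean inner product on `Pt d'`. -/
def dot {d' : ℕ} (a b : Pt d') : ℝ := (∑ i, a.1 i * b.1 i) + a.2 * b.2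

/-- The vertical unit vector `e_z`. -/
def ez (d' : ℕ) : Pt d' := (0, 1)

/-- The transverse unit coordinate vectors. -/
def eY {d' : ℕ} (i : Fin d') : Pt d' := (Pi.single i 1, 0)

/-- The spatial gradient of a scalar field. -/
def grad {d' : ℕ} (f : Pt d' → ℝ) (x : Pt d') : Pt d' :=
  (fun i => fderiv ℝ f x (eY i), fderiv ℝ f x (ez d'))

/-- `|∇f|²`. -/
def gradNormSq {d' : ℕ} (f : Pt d' → ℝ) (x : Pt d') : ℝ :=
  dot (grad f x) (grad f x)

/-- The Laplacian of a scalar field. -/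
def laplacian {d' : ℕ} (f : Pt d' → ℝ) (x : Pt d') : ℝ :=
  (∑ i, fderiv ℝ (fun y => fderiv ℝ f y (eY i)) x (eY i))
    + fderiv ℝ (fun y => fderiv ℝ f y (ez d')) x (ez d')

/-- The divergence of a vector field. -/
def divg {d' : ℕ} (u : Pt d' → Pt d') (x : Pt d') : ℝ :=
  (∑ i, fderiv ℝ (fun y => (u y).1 i) x (eY i))
    + fderiv ℝ (fun y => (u y).2) x (ez d')

/-- The directional derivative `(v·∇)u` of a vector field `u` in direction `v`. -/
def dirDeriv {d' : ℕ} (u : Pt d' → Pt d') (x v : Pt d') : Pt d' :=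
  (fun i => fderiv ℝ (fun y => (u y).1 i) x v, fderiv ℝ (fun y => (u y).2) x v)

/-- The stratified reference profile `ρ₀`. -/
def ρinit (ρm ρp : ℝ) (z : ℝ) : ℝ := if 0 ≤ z then ρp else ρm

/-- A classical solution of the miscible Rayleigh–Taylor system
`ρ_t + u·∇ρ − Δρ = 0`, `ρ(u_t + (u·∇)u) − (∇ρ·∇)u + ∇p + ρ g e_z = 0`, `∇·u = 0`
on the strip `[0,L]^{d-1} × ℝ`, periodic in the transverse directions, with
`u`, `∇ρ` and `ρ − ρ₀` decaying as `z → ±∞`. -/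
structure ClassicalSolution (d' : ℕ) (ρm ρp g L : ℝ) where
  ρ : Pt d' → ℝ → ℝ
  u : Pt d' → ℝ → Pt d'
  p : Pt d' → ℝ → ℝ
  smooth_ρ : ContDiff ℝ (⊤ : ℕ∞) (fun q : Pt d' × ℝ => ρ q.1 q.2)
  smooth_u : ContDiff ℝ (⊤ : ℕ∞) (fun q : Pt d' × ℝ => u q.1 q.2)
  smooth_p : ContDiff ℝ (⊤ : ℕ∞) (fun q : Pt d' × ℝ => p q.1 q.2)
  ρ_range : ∀ x t, 0 ≤ t → ρ x t ∈ Set.Icc ρm ρp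
  transport : ∀ x t, 0 < t →
    deriv (ρ x) t + dot (u x t) (grad (fun y => ρ y t) x)
      - laplacian (fun y => ρ y t) x = 0
  momentum : ∀ x t, 0 < t →
    (ρ x t) • (deriv (u x) t + dirDeriv (fun y => u y t) x (u x t))
      - dirDeriv (fun y => u y t) x (grad (fun y => ρ y t) x)
      + grad (fun y => p y t) x + (ρ x t * g) • ez d' = 0
  incompressible : ∀ x t, 0 < t → divg (fun y => u y t) x = 0
  periodic_ρ : ∀ (x : Pt d') (t : ℝ) (i : Fin d'), ρ (x.1 + Pi.single i L, x.2) t = ρ x t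
  periodic_u : ∀ (x : Pt d') (t : ℝ) (i : Fin d'), u (x.1 + Pi.single i L, x.2) t = u x t
  periodic_p : ∀ (x : Pt d') (t : ℝ) (i : Fin d'), p (x.1 + Pi.single i L, x.2) t = p x t
  decay_u : ∀ t, 0 ≤ t → ∀ y, Tendsto (fun z => u (y, z) t) (cocompact ℝ) (nhds 0)
  decay_ρ : ∀ t, 0 ≤ t → ∀ y,
    Tendsto (fun z => ρ (y, z) t - ρinit ρm ρp z) (cocompact ℝ) (nhds 0)
  decay_gradρ : ∀ t, 0 ≤ t → ∀ y,
    Tendsto (fun z => grad (fun x => ρ x t) (y, z)) (cocompact ℝ) (nhds 0)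

variable {d' : ℕ} {ρm ρp g L : ℝ}

/-- The (negative of the) potential energy `E_p`. -/
def Ep (sol : ClassicalSolution d' ρm ρp g L) (t : ℝ) : ℝ :=
  (ρp - ρm)⁻¹ * nint d' L (fun x => (ρinit ρm ρp x.2 - sol.ρ x t) * g * x.2)

/-- The kinetic energy `E_k`. -/
def Ek (sol : ClassicalSolution d' ρm ρp g L) (t : ℝ) : ℝ :=
  (1/2) * (ρp - ρm)⁻¹ * nint d' L (fun x => sol.ρ x t * dot (sol.u x t) (sol.u x t))

/-- The quadratic mixing entropy `H`. -/
def Hent (sol : ClassicalSolution d' ρm ρp g L) (t : ℝ) : ℝ :=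
  ((ρp - ρm) ^ 2)⁻¹ * nint d' L (fun x => (ρp - sol.ρ x t) * (sol.ρ x t - ρm))

/-- The logarithmic mixing entropy `S`. -/
def Sent (sol : ClassicalSolution d' ρm ρp g L) (t : ℝ) : ℝ :=
  - nint d' L (fun x =>
      ((ρp - sol.ρ x t) / (ρp - ρm)) * Real.log ((ρp - sol.ρ x t) / (ρp - ρm))
      + ((sol.ρ x t - ρm) / (ρp - ρm)) * Real.log ((sol.ρ x t - ρm) / (ρp - ρm)))

/-- The averaged perimeter `P`. -/
def Per (sol : ClassicalSolution d' ρm ρp g L) (t : ℝ) : ℝ :=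
  (ρp - ρm)⁻¹ * nint d' L (fun x => Real.sqrt (gradNormSq (fun y => sol.ρ y t) x))

/-- The flux function `F(s) = (ρ₊ − ρ₋) s(1−s)/(ρ₊ s + ρ₋ (1−s))`. -/
def Flux (ρm ρp : ℝ) (s : ℝ) : ℝ :=
  (ρp - ρm) * (s * (1 - s)) / (ρp * s + ρm * (1 - s))


set_option maxHeartbeats 4000000 in
/-- **Optimal background field inequality.** For measurable ρ : [0,L]^{d-1} × ℝ → [ρ₋,ρ₊]
with ρ = ρ₋ χ + ρ₊(1 − χ), s = χ̄ the transverse average, and harmonic-mean background field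
ρ̃(z) = (mean of ρ⁻¹)⁻¹, one has (ρ₊−ρ₋)⁻¹ ⨍ (ρ−ρ̃)²/ρ dx ≤ ∫_ℝ F(s(z)) dz, with equality
iff ρ ∈ {ρ₋, ρ₊} almost everywhere. -/
theorem optimal_background_field
    (d' : ℕ) (hd : 1 ≤ d') (ρm ρp L : ℝ)
    (hρm : 0 < ρm) (hρ : ρm < ρp) (hL : 0 < L)
    (ρ : Pt d' → ℝ) (hρ_meas : Measurable ρ)
    (hρ_range : ∀ x, ρ x ∈ Set.Icc ρm ρp)
    (χ : Pt d' → ℝ) (hχ_range : ∀ x, χ x ∈ Set.Icc (0:ℝ) 1)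
    (hχ : ∀ x, ρ x = ρm * χ x + ρp * (1 - χ x))
    (s : ℝ → ℝ) (hs : ∀ z, s z = tavg d' L χ z)
    (ρt : ℝ → ℝ) (hρt : ∀ z, ρt z = (tavg d' L (fun x => (ρ x)⁻¹) z)⁻¹)
    (hint1 : IntegrableOn (fun x => (ρ x - ρt x.2) ^ 2 / ρ x) (strip d' L) volume)
    (hint2 : Integrable (fun z => Flux ρm ρp (s z)) volume) :
    (ρp - ρm)⁻¹ * nint d' L (fun x => (ρ x - ρt x.2) ^ 2 / ρ x) ≤
        ∫ z : ℝ, Flux ρm ρp (s z)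
    ∧ ((ρp - ρm)⁻¹ * nint d' L (fun x => (ρ x - ρt x.2) ^ 2 / ρ x) =
          ∫ z : ℝ, Flux ρm ρp (s z)
        ↔ ∀ᵐ x ∂(volume.restrict (strip d' L)), ρ x = ρm ∨ ρ x = ρp) := by
  classical
  have hpm : (0:ℝ) < ρp - ρm := sub_pos.2 hρ
  have hpm' : ρp - ρm ≠ 0 := ne_of_gt hpm
  have hρp : (0:ℝ) < ρp := hρm.trans hρ
  have hm0 : ρm ≠ 0 := ne_of_gt hρm
  have hp0 : ρp ≠ 0 := ne_of_gt hρp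
  have hV : (0:ℝ) < L ^ d' := pow_pos hL d'
  have hV0 : (L:ℝ) ^ d' ≠ 0 := ne_of_gt hV
  set V : ℝ := L ^ d' with hVdef
  have hρpos : ∀ x, 0 < ρ x := fun x => lt_of_lt_of_le hρm (hρ_range x).1
  have hρne : ∀ x, ρ x ≠ 0 := fun x => ne_of_gt (hρpos x)
  have hχ_eq : ∀ x, χ x = (ρp - ρ x) / (ρp - ρm) := by
    intro x
    have h1 := hχ x
    field_simp
    linarith
  have hχ_meas : Measurable χ := by
    have : χ = fun x => (ρp - ρ x) / (ρp - ρm) := funext hχ_eq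
    rw [this]
    exact (measurable_const.sub hρ_meas).div_const _
  -- box facts
  have mB : MeasurableSet (box d' L) := MeasurableSet.univ_pi (fun _ => measurableSet_Icc)
  have volB : volume (box d' L) = ENNReal.ofReal V := by
    rw [box, volume_pi_pi]
    simp only [Real.volume_Icc, sub_zero, Finset.prod_const, Finset.card_univ,
      Fintype.card_fin]
    rw [← ENNReal.ofReal_pow hL.le]
  have volBlt : volume (box d' L) < ⊤ := by rw [volB]; exact ENNReal.ofReal_lt_top
  have volBtoReal : volume.real (box d' L) = V := by
    rw [measureReal_def, volB, ENNReal.toReal_ofReal hV.le]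
  have int1B : IntegrableOn (fun _ : Fin d' → ℝ => (1:ℝ)) (box d' L) volume :=
    integrableOn_const volBlt.ne
  -- slice integrability of bounded measurable functions
  have hslice : ∀ (f : Pt d' → ℝ), Measurable f → ∀ (C : ℝ), (∀ x, |f x| ≤ C) →
      ∀ z : ℝ, IntegrableOn (fun y => f (y, z)) (box d' L) volume := by
    intro f hf C hC z
    refine Integrable.mono' (g := fun _ => C) (integrableOn_const volBlt.ne)
      ((hf.comp measurable_prodMk_right).aestronglyMeasurable) ?_
    exact Filter.Eventually.of_forall fun y => hC _
  -- the defect function G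
  set G : Pt d' → ℝ := fun x => χ x * (1 - χ x) * (ρp - ρm) ^ 2 / (ρm * ρp * ρ x)
    with hGdef
  have hG_nonneg : ∀ x, 0 ≤ G x := by
    intro x
    have hc := hχ_range x
    have hd0 : (0:ℝ) < ρm * ρp * ρ x := mul_pos (mul_pos hρm hρp) (hρpos x)
    exact div_nonneg (mul_nonneg (mul_nonneg hc.1 (by linarith [hc.2])) (sq_nonneg _))
      hd0.le
  have hG_bd : ∀ x, |G x| ≤ (ρp - ρm) ^ 2 / (ρm * ρp * ρm) := by
    intro x
    have hc := hχ_range x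
    rw [abs_of_nonneg (hG_nonneg x)]
    have h1 : χ x * (1 - χ x) * (ρp - ρm) ^ 2 ≤ 1 * (ρp - ρm) ^ 2 := by
      apply mul_le_mul_of_nonneg_right _ (sq_nonneg _)
      nlinarith [hc.1, hc.2]
    have h2 : ρm * ρp * ρm ≤ ρm * ρp * ρ x :=
      mul_le_mul_of_nonneg_left (hρ_range x).1 (by positivity)
    calc χ x * (1 - χ x) * (ρp - ρm) ^ 2 / (ρm * ρp * ρ x)
        ≤ (1 * (ρp - ρm) ^ 2) / (ρm * ρp * ρm) :=
          div_le_div₀ (by positivity) h1 (by positivity) h2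
      _ = (ρp - ρm) ^ 2 / (ρm * ρp * ρm) := by rw [one_mul]
  have hG_meas : Measurable G := by
    apply Measurable.div
    · exact ((hχ_meas.mul (measurable_const.sub hχ_meas)).mul measurable_const)
    · exact measurable_const.mul hρ_meas
  -- pointwise bounds
  have hρ_bd : ∀ x, |ρ x| ≤ ρp := by
    intro x
    rw [abs_of_pos (hρpos x)]; exact (hρ_range x).2
  have hρinv_bd : ∀ x, |(ρ x)⁻¹| ≤ ρm⁻¹ := by
    intro x
    rw [abs_of_pos (inv_pos.2 (hρpos x))]
    exact inv_anti₀ hρm (hρ_range x).1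
  have hχ_bd : ∀ x, |χ x| ≤ 1 := by
    intro x
    rw [abs_of_nonneg (hχ_range x).1]; exact (hχ_range x).2
  have intρ : ∀ z, IntegrableOn (fun y => ρ (y, z)) (box d' L) volume :=
    hslice ρ hρ_meas ρp hρ_bd
  have intρinv : ∀ z, IntegrableOn (fun y => (ρ (y, z))⁻¹) (box d' L) volume :=
    hslice (fun x => (ρ x)⁻¹) hρ_meas.inv ρm⁻¹ hρinv_bd
  have intχ : ∀ z, IntegrableOn (fun y => χ (y, z)) (box d' L) volume :=
    hslice χ hχ_meas 1 hχ_bd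
  have intG : ∀ z, IntegrableOn (fun y => G (y, z)) (box d' L) volume :=
    hslice G hG_meas _ hG_bd
  -- basic slice integrals
  have hsz : ∀ z, ∫ y in box d' L, χ (y, z) = V * s z := by
    intro z
    rw [hs z, tavg, ← hVdef]
    field_simp
  have e1 : ∀ z, ∫ y in box d' L, (1 - χ (y, z)) = V - V * s z := by
    intro z
    rw [integral_sub int1B (intχ z), setIntegral_const, volBtoReal, smul_eq_mul,
      mul_one, hsz z]
  have hρt_eq : ∀ z, ρt z = V * (∫ y in box d' L, (ρ (y, z))⁻¹)⁻¹ := by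
    intro z
    rw [hρt z]
    have : tavg d' L (fun x => (ρ x)⁻¹) z = V⁻¹ * ∫ y in box d' L, (ρ (y, z))⁻¹ := by
      simp only [tavg, hVdef]
    rw [this, mul_inv, inv_inv]
  -- pointwise convexity identity
  have hpt : ∀ x, (ρ x)⁻¹ = χ x * ρm⁻¹ + (1 - χ x) * ρp⁻¹ - G x := by
    intro x
    have hc := hχ_range x
    have h3 : (0:ℝ) < ρm * χ x + ρp * (1 - χ x) := by nlinarith [hc.1, hc.2]
    simp only [hGdef]
    rw [hχ x]
    field_simp
    ring
  have hIJ : ∀ z, ∫ y in box d' L, (ρ (y, z))⁻¹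
      = V * (s z * ρm⁻¹ + (1 - s z) * ρp⁻¹) - ∫ y in box d' L, G (y, z) := by
    intro z
    have h4 : IntegrableOn (fun y => χ (y, z) * ρm⁻¹) (box d' L) volume := by
      exact (intχ z).mul_const _
    have h5 : IntegrableOn (fun y => (1 - χ (y, z)) * ρp⁻¹) (box d' L) volume := by
      exact (int1B.sub (intχ z)).mul_const _
    have hadd : IntegrableOn
        (fun y => χ (y, z) * ρm⁻¹ + (1 - χ (y, z)) * ρp⁻¹) (box d' L) volume := by
      exact h4.add h5
    have e : ∫ y in box d' L, (ρ (y, z))⁻¹ = ∫ y in box d' L,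
        ((χ (y, z) * ρm⁻¹ + (1 - χ (y, z)) * ρp⁻¹) - G (y, z)) :=
      integral_congr_ae (Filter.Eventually.of_forall fun y => hpt (y, z))
    rw [e, integral_sub hadd (intG z), integral_add h4 h5,
      integral_mul_const, integral_mul_const, hsz z, e1 z]
    ring
  have hρb : ∀ z, ∫ y in box d' L, ρ (y, z) = V * (ρm * s z + ρp * (1 - s z)) := by
    intro z
    have e : ∫ y in box d' L, ρ (y, z) = ∫ y in box d' L,
        (ρm * χ (y, z) + ρp * (1 - χ (y, z))) :=
      integral_congr_ae (Filter.Eventually.of_forall fun y => hχ (y, z))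
    have h4 : IntegrableOn (fun y => ρm * χ (y, z)) (box d' L) volume := by
      exact (intχ z).const_mul _
    have h5 : IntegrableOn (fun y => ρp * (1 - χ (y, z))) (box d' L) volume := by
      exact (int1B.sub (intχ z)).const_mul _
    rw [e, integral_add h4 h5, integral_const_mul, integral_const_mul, hsz z, e1 z]
    ring
  have hI_lb : ∀ z, V * ρp⁻¹ ≤ ∫ y in box d' L, (ρ (y, z))⁻¹ := by
    intro z
    have h1 : ∫ _y in box d' L, (ρp⁻¹ : ℝ) = V * ρp⁻¹ := by
      rw [setIntegral_const, volBtoReal, smul_eq_mul]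
    rw [← h1]
    refine integral_mono (integrableOn_const volBlt.ne) (intρinv z) ?_
    intro y
    exact inv_anti₀ (hρpos _) (hρ_range _).2
  have hIpos : ∀ z, 0 < ∫ y in box d' L, (ρ (y, z))⁻¹ :=
    fun z => lt_of_lt_of_le (by positivity) (hI_lb z)
  have hJnn : ∀ z, 0 ≤ ∫ y in box d' L, G (y, z) :=
    fun z => setIntegral_nonneg mB fun y _ => hG_nonneg _
  have hs01 : ∀ z, 0 ≤ s z ∧ s z ≤ 1 := by
    intro z
    have h1 : 0 ≤ ∫ y in box d' L, χ (y, z) :=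
      setIntegral_nonneg mB fun y _ => (hχ_range _).1
    have h2 : ∫ y in box d' L, χ (y, z) ≤ ∫ _y in box d' L, (1:ℝ) :=
      integral_mono (intχ z) int1B (fun y => (hχ_range _).2)
    rw [setIntegral_const, volBtoReal, smul_eq_mul, mul_one] at h2
    rw [hsz z] at h1 h2
    constructor <;> nlinarith
  -- the key slice formula (division-free product form)
  have keyz' : ∀ z, ((ρp - ρm) * Flux ρm ρp (s z) - ((ρm * s z + ρp * (1 - s z)) - ρt z))
      * (((∫ y in box d' L, (ρ (y, z))⁻¹) + ∫ y in box d' L, G (y, z))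
          * ∫ y in box d' L, (ρ (y, z))⁻¹)
      = V * ∫ y in box d' L, G (y, z) := by
    intro z
    have ha := hs01 z
    obtain ⟨i, hidef⟩ : ∃ i : ℝ, (∫ y in box d' L, (ρ (y, z))⁻¹) = i := ⟨_, rfl⟩
    obtain ⟨j, hjdef⟩ : ∃ j : ℝ, (∫ y in box d' L, G (y, z)) = j := ⟨_, rfl⟩
    obtain ⟨f, hfdef⟩ : ∃ f : ℝ, Flux ρm ρp (s z) = f := ⟨_, rfl⟩
    obtain ⟨r, hrdef⟩ : ∃ r : ℝ, ρt z = r := ⟨_, rfl⟩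
    have hi : 0 < i := hidef ▸ hIpos z
    have hD : (0:ℝ) < ρp * s z + ρm * (1 - s z) := by nlinarith [ha.1, ha.2]
    have h1 : f * (ρp * s z + ρm * (1 - s z)) = (ρp - ρm) * (s z * (1 - s z)) := by
      rw [← hfdef]
      simp only [Flux]
      field_simp
    have h2 : r * i = V := by
      rw [← hrdef, hρt_eq z, hidef]
      field_simp
    have h3 : ρm * ρp * (i + j) = V * (ρp * s z + ρm * (1 - s z)) := by
      have hIJz : i = V * (s z * ρm⁻¹ + (1 - s z) * ρp⁻¹) - j := by
        rw [← hidef, ← hjdef]; exact hIJ z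
      have hmm : ρm * ρm⁻¹ = 1 := mul_inv_cancel₀ hm0
      have hpp : ρp * ρp⁻¹ = 1 := mul_inv_cancel₀ hp0
      linear_combination (ρm * ρp) * hIJz + (V * s z * ρp) * hmm
        + (V * (1 - s z) * ρm) * hpp
    rw [hidef, hjdef, hfdef, hrdef]
    have hmp : (ρm * ρp : ℝ) ≠ 0 := mul_ne_zero hm0 hp0
    apply mul_left_cancel₀ hmp
    linear_combination (V * i * (ρp - ρm)) * h1
      + (((ρp - ρm) * f - ρm * s z - ρp * (1 - s z)) * i) * h3
      + (ρm * ρp * (i + j)) * h2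
  -- slice identity for the main integrand
  have hFz : ∀ z, ∫ y in box d' L, (ρ (y, z) - ρt z) ^ 2 / ρ (y, z)
      = V * ((ρm * s z + ρp * (1 - s z)) - ρt z) := by
    intro z
    have hpt2 : ∀ y : Fin d' → ℝ, (ρ (y, z) - ρt z) ^ 2 / ρ (y, z)
        = (ρ (y, z) - 2 * ρt z) + (ρt z) ^ 2 * (ρ (y, z))⁻¹ := by
      intro y
      have h0 : ρ (y, z) ≠ 0 := hρne (y, z)
      field_simp [h0]
      ring
    have i1 : IntegrableOn (fun y => ρ (y, z) - 2 * ρt z) (box d' L) volume := by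
      exact (intρ z).sub (integrableOn_const volBlt.ne)
    have i2 : IntegrableOn (fun y => (ρt z) ^ 2 * (ρ (y, z))⁻¹) (box d' L) volume := by
      exact (intρinv z).const_mul _
    rw [integral_congr_ae (Filter.Eventually.of_forall hpt2),
      integral_add i1 i2,
      integral_sub (intρ z) (integrableOn_const volBlt.ne),
      setIntegral_const, integral_const_mul, volBtoReal, hρb z, hρt_eq z]
    have hi : 0 < ∫ y in box d' L, (ρ (y, z))⁻¹ := hIpos z
    set i : ℝ := ∫ y in box d' L, (ρ (y, z))⁻¹ with hidef
    rw [smul_eq_mul]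
    field_simp [hi.ne']
    ring
  -- Fubini setup
  set μB : Measure (Fin d' → ℝ) := volume.restrict (box d' L) with hμBdef
  have hrestrict : volume.restrict (strip d' L)
      = μB.prod (volume : Measure ℝ) := by
    rw [strip, Measure.volume_eq_prod, ← Measure.prod_restrict,
      Measure.restrict_univ, hμBdef]
  have hint1' : Integrable (fun x : Pt d' => (ρ x - ρt x.2) ^ 2 / ρ x)
      (μB.prod volume) := by
    rw [← hrestrict]
    exact hint1
  have hgz : ∀ z, (∫ y, (ρ (y, z) - ρt z) ^ 2 / ρ (y, z) ∂μB)
      = V * ((ρm * s z + ρp * (1 - s z)) - ρt z) := fun z => hFz z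
  have hFub : (∫ x in strip d' L, (ρ x - ρt x.2) ^ 2 / ρ x)
      = ∫ z : ℝ, ∫ y, (ρ ((y, z) : Pt d') - ρt z) ^ 2 / ρ (y, z) ∂μB := by
    rw [show (∫ x in strip d' L, (ρ x - ρt x.2) ^ 2 / ρ x)
        = ∫ x, (ρ x - ρt x.2) ^ 2 / ρ x ∂(μB.prod volume) by rw [← hrestrict]]
    rw [integral_prod _ hint1']
    exact integral_integral_swap
      (f := fun y z => (ρ ((y, z) : Pt d') - ρt z) ^ 2 / ρ (y, z)) hint1'
  have hg_int : Integrable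
      (fun z => ∫ y, (ρ ((y, z) : Pt d') - ρt z) ^ 2 / ρ (y, z) ∂μB)
      (volume : Measure ℝ) := hint1'.integral_prod_right
  -- the deficiency function h
  set ψ : ℝ → ℝ := fun z => (ρm * s z + ρp * (1 - s z)) - ρt z with hψdef
  have hψ_int : Integrable ψ (volume : Measure ℝ) := by
    have : ψ = fun z => V⁻¹ *
        ∫ y, (ρ ((y, z) : Pt d') - ρt z) ^ 2 / ρ (y, z) ∂μB := by
      funext z
      rw [hgz z, hψdef]
      field_simp
    rw [this]
    exact hg_int.const_mul _
  set h : ℝ → ℝ := fun z => (ρp - ρm) * Flux ρm ρp (s z) - ψ z with hhdef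
  have hh_int : Integrable h (volume : Measure ℝ) := (hint2.const_mul _).sub hψ_int
  have hh_nonneg : ∀ z, 0 ≤ h z := by
    intro z
    have hk := keyz' z
    have hi := hIpos z
    have hj := hJnn z
    have hc : 0 < (((∫ y in box d' L, (ρ (y, z))⁻¹) + ∫ y in box d' L, G (y, z))
        * ∫ y in box d' L, (ρ (y, z))⁻¹) := mul_pos (by linarith) hi
    have hVj : 0 ≤ V * ∫ y in box d' L, G (y, z) :=
      mul_nonneg hV.le hj
    simp only [hhdef, hψdef]
    nlinarith [hk, hc, hVj]
  have hh_zero_iff : ∀ z, h z = 0 ↔ (∫ y in box d' L, G (y, z)) = 0 := by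
    intro z
    have hk := keyz' z
    have hi := hIpos z
    have hj := hJnn z
    have hc : (((∫ y in box d' L, (ρ (y, z))⁻¹) + ∫ y in box d' L, G (y, z))
        * ∫ y in box d' L, (ρ (y, z))⁻¹) ≠ 0 := ne_of_gt (mul_pos (by linarith) hi)
    constructor
    · intro h0
      have h0' : ((ρp - ρm) * Flux ρm ρp (s z)
          - ((ρm * s z + ρp * (1 - s z)) - ρt z)) = 0 := by
        simpa [hhdef, hψdef] using h0
      rw [h0', zero_mul] at hk
      rcases mul_eq_zero.1 hk.symm with h' | h'
      · exact absurd h' hV0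
      · exact h'
    · intro h0
      simp only [hhdef, hψdef]
      rw [h0, mul_zero, add_zero] at hk
      have hc' : ((∫ y in box d' L, (ρ (y, z))⁻¹) * ∫ y in box d' L, (ρ (y, z))⁻¹) ≠ 0 :=
        ne_of_gt (mul_pos hi hi)
      exact (mul_eq_zero.1 hk).resolve_right hc'
  -- relating the integrals
  have hnint : nint d' L (fun x => (ρ x - ρt x.2) ^ 2 / ρ x) = ∫ z : ℝ, ψ z := by
    rw [nint, ← hVdef, hFub]
    rw [show (fun z : ℝ => ∫ y, (ρ ((y, z) : Pt d') - ρt z) ^ 2 / ρ (y, z) ∂μB)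
        = fun z : ℝ => V * ψ z from funext fun z => by rw [hgz z]]
    rw [integral_const_mul]
    field_simp
  have hinth : ∫ z : ℝ, h z = (ρp - ρm) * (∫ z : ℝ, Flux ρm ρp (s z)) - ∫ z : ℝ, ψ z := by
    simp only [hhdef]
    rw [integral_sub (hint2.const_mul _) hψ_int, integral_const_mul]
  have hinth_nonneg : 0 ≤ ∫ z : ℝ, h z :=
    integral_nonneg hh_nonneg
  -- the main inequality
  have hineq : (ρp - ρm)⁻¹ * nint d' L (fun x => (ρ x - ρt x.2) ^ 2 / ρ x)
      ≤ ∫ z : ℝ, Flux ρm ρp (s z) := by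
    rw [hnint]
    rw [inv_mul_le_iff₀ hpm]
    linarith [hinth_nonneg, hinth]
  refine ⟨hineq, ?_⟩
  -- equality case
  have heq_iff : ((ρp - ρm)⁻¹ * nint d' L (fun x => (ρ x - ρt x.2) ^ 2 / ρ x)
      = ∫ z : ℝ, Flux ρm ρp (s z)) ↔ (∫ z : ℝ, h z) = 0 := by
    rw [hnint, hinth]
    constructor
    · intro he
      have : ∫ z : ℝ, ψ z = (ρp - ρm) * ∫ z : ℝ, Flux ρm ρp (s z) := by
        field_simp at he
        linarith
      linarith
    · intro he
      have : ∫ z : ℝ, ψ z = (ρp - ρm) * ∫ z : ℝ, Flux ρm ρp (s z) := by linarith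
      rw [this]
      field_simp
  -- pointwise characterization of G = 0
  have hGzero : ∀ x, G x = 0 ↔ (ρ x = ρm ∨ ρ x = ρp) := by
    intro x
    have hc := hχ_range x
    have hd0 : ρm * ρp * ρ x ≠ 0 := ne_of_gt (mul_pos (mul_pos hρm hρp) (hρpos x))
    simp only [hGdef]
    rw [div_eq_zero_iff]
    constructor
    · rintro (h' | h')
      · have h2 : χ x * (1 - χ x) = 0 := by
          rcases mul_eq_zero.1 h' with h3 | h3
          · exact h3
          · exact absurd h3 (pow_ne_zero 2 hpm')
        rcases mul_eq_zero.1 h2 with h3 | h3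
        · right; rw [hχ x, h3]; ring
        · left; rw [hχ x, show χ x = 1 from by linarith]; ring
      · exact absurd h' hd0
    · intro h'
      left
      rcases h' with h' | h'
      · rw [hχ_eq x, h', div_self hpm']; ring
      · rw [hχ_eq x, h']; simp
  -- slice equality characterization
  have hJzero_iff : ∀ z, (∫ y in box d' L, G (y, z)) = 0 ↔
      ∀ᵐ y ∂(volume.restrict (box d' L)), ρ ((y, z) : Pt d') = ρm ∨ ρ (y, z) = ρp := by
    intro z
    rw [integral_eq_zero_iff_of_nonneg (fun y => hG_nonneg ((y, z) : Pt d')) (intG z)]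
    constructor
    · intro hae
      filter_upwards [hae] with y hy
      exact (hGzero _).1 (by simpa using hy)
    · intro hae
      filter_upwards [hae] with y hy
      simpa using (hGzero ((y, z) : Pt d')).2 hy
  -- product a.e. equivalence
  have hT : MeasurableSet {x : Pt d' | ¬(ρ x = ρm ∨ ρ x = ρp)} :=
    ((hρ_meas (measurableSet_singleton ρm)).union
      (hρ_meas (measurableSet_singleton ρp))).compl
  have hprod_iff : (∀ᵐ x ∂(μB.prod (volume : Measure ℝ)), ρ x = ρm ∨ ρ x = ρp)
      ↔ ∀ᵐ z : ℝ, ∀ᵐ y ∂μB, ρ ((y, z) : Pt d') = ρm ∨ ρ (y, z) = ρp := by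
    rw [ae_iff, Measure.prod_apply_symm hT,
      lintegral_eq_zero_iff (measurable_measure_prodMk_right hT)]
    constructor
    · intro h'
      filter_upwards [h'] with z hz
      rw [ae_iff]
      simpa using hz
    · intro h'
      filter_upwards [h'] with z hz
      rw [ae_iff] at hz
      simpa using hz
  rw [heq_iff, integral_eq_zero_iff_of_nonneg hh_nonneg hh_int, hrestrict, hprod_iff]
  constructor
  · intro h'
    filter_upwards [h'] with z hz
    exact (hJzero_iff z).1 ((hh_zero_iff z).1 (by simpa using hz))
  · intro h'
    filter_upwards [h'] with z hz
    have h0 : (∫ y in box d' L, G (y, z)) = 0 := (hJzero_iff z).2 hz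
    simpa using (hh_zero_iff z).2 h0


end RT
end
end

section
/- Existence of an interpolation constant: let F : [0,1] → ℝ be a bounded concave function with F(0) = F(1) = 0 satisfying the growth conditions F(s) ≤ C₁ s^α and F(s) ≤ C₂ (1 − s)^α for some constants C₁, C₂ > 0 and α > 1/2. Then there exists a constant C < ∞ (depending only on C₁, C₂, α and the supremum norm of F) such that for every profile s, ∫_ℝ F(s(z)) dz ≤ C ( ∫_ℝ (s(z) − s₀(z)) z dz )^{1/2}. -/
open MeasureTheory Filter Real

noncomputable section

/-- The step profile `s₀(z) = 1` for `z < 0` and `s₀(z) = 0` for `z ≥ 0`. -/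
def stepProfile : ℝ → ℝ := fun z => if z < 0 then 1 else 0

/-- A profile is a measurable function `s : ℝ → [0,1]` with `s(z) → 1` as `z → −∞`
and `s(z) → 0` as `z → +∞`. -/
structure IsProfile (s : ℝ → ℝ) : Prop where
  meas : Measurable s
  mem_Icc : ∀ z, s z ∈ Set.Icc (0:ℝ) 1
  tendsto_atBot : Tendsto s atBot (nhds 1)
  tendsto_atTop : Tendsto s atTop (nhds 0)

lemma bathtub_pos (E : Set ℝ) (hE : MeasurableSet E) (hsub : ∀ z ∈ E, 0 < z) (A : ℝ)
    (h : ∫⁻ z in E, ENNReal.ofReal z ≤ ENNReal.ofReal A) :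
    volume E ≤ ENNReal.ofReal (2 * Real.sqrt A) := by
  rcases le_or_gt A 0 with hA | hA
  · -- A ≤ 0 and the integral is 0
    have hA0 : ENNReal.ofReal A = 0 := ENNReal.ofReal_eq_zero.2 hA
    have hint0 : ∫⁻ z in E, ENNReal.ofReal z = 0 := le_antisymm (hA0 ▸ h) (zero_le)
    have hae : ∀ᵐ z ∂(volume.restrict E), ENNReal.ofReal z = 0 :=
      (lintegral_eq_zero_iff (by measurability)).1 hint0
    have hnull : volume.restrict E {z : ℝ | ENNReal.ofReal z ≠ 0} = 0 := by
      simpa [ae_iff] using hae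
    have hE0 : volume E = 0 := by
      have h1 : volume E = volume.restrict E E := (Measure.restrict_apply_self _ _).symm
      rw [h1]
      refine measure_mono_null ?_ hnull
      intro z hz
      simp only [Set.mem_setOf_eq, ne_eq, ENNReal.ofReal_eq_zero, not_le]
      exact hsub z hz
    simp [hE0]
  · have hcpos : 0 < Real.sqrt A := Real.sqrt_pos.2 hA
    have key : volume (E ∩ Set.Ioi (Real.sqrt A)) * ENNReal.ofReal (Real.sqrt A)
        ≤ ENNReal.ofReal A := by
      calc volume (E ∩ Set.Ioi (Real.sqrt A)) * ENNReal.ofReal (Real.sqrt A)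
          = ∫⁻ _ in E ∩ Set.Ioi (Real.sqrt A), ENNReal.ofReal (Real.sqrt A) := by
            rw [setLIntegral_const]; ring
        _ ≤ ∫⁻ z in E ∩ Set.Ioi (Real.sqrt A), ENNReal.ofReal z := by
            refine setLIntegral_mono (by measurability) fun z hz => ?_
            exact ENNReal.ofReal_le_ofReal (le_of_lt hz.2)
        _ ≤ ∫⁻ z in E, ENNReal.ofReal z := lintegral_mono_set Set.inter_subset_left
        _ ≤ ENNReal.ofReal A := h
    have h2 : volume (E ∩ Set.Ioi (Real.sqrt A)) ≤ ENNReal.ofReal (Real.sqrt A) := by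
      have := (ENNReal.le_div_iff_mul_le (Or.inl (by simp [hcpos])) (Or.inl (by simp))).2 key
      rwa [← ENNReal.ofReal_div_of_pos hcpos, Real.div_sqrt] at this
    have hsplit : E ⊆ (E ∩ Set.Ioc 0 (Real.sqrt A)) ∪ (E ∩ Set.Ioi (Real.sqrt A)) := by
      intro z hz
      rcases le_or_gt z (Real.sqrt A) with h' | h'
      · exact Or.inl ⟨hz, hsub z hz, h'⟩
      · exact Or.inr ⟨hz, h'⟩
    calc volume E ≤ volume ((E ∩ Set.Ioc 0 (Real.sqrt A)) ∪ (E ∩ Set.Ioi (Real.sqrt A))) :=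
          measure_mono hsplit
      _ ≤ volume (E ∩ Set.Ioc 0 (Real.sqrt A)) + volume (E ∩ Set.Ioi (Real.sqrt A)) :=
          measure_union_le _ _
      _ ≤ volume (Set.Ioc (0:ℝ) (Real.sqrt A)) + ENNReal.ofReal (Real.sqrt A) :=
          add_le_add (measure_mono Set.inter_subset_right) h2
      _ = ENNReal.ofReal (Real.sqrt A) + ENNReal.ofReal (Real.sqrt A) := by
          rw [Real.volume_Ioc]; norm_num
      _ = ENNReal.ofReal (2 * Real.sqrt A) := by
          rw [← ENNReal.ofReal_add (Real.sqrt_nonneg A) (Real.sqrt_nonneg A)]; ring_nf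

lemma bathtub_neg (E : Set ℝ) (hE : MeasurableSet E) (hsub : ∀ z ∈ E, z < 0) (A : ℝ)
    (h : ∫⁻ z in E, ENNReal.ofReal (-z) ≤ ENNReal.ofReal A) :
    volume E ≤ ENNReal.ofReal (2 * Real.sqrt A) := by
  have hmp : MeasurePreserving (fun z : ℝ => -z) volume volume :=
    Measure.measurePreserving_neg _
  have hemb : MeasurableEmbedding (fun z : ℝ => -z) :=
    (Homeomorph.neg ℝ).measurableEmbedding
  have hvol : volume ((fun z : ℝ => -z) ⁻¹' E) = volume E :=
    hmp.measure_preimage hE.nullMeasurableSet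
  have hint : ∫⁻ z in (fun z : ℝ => -z) ⁻¹' E, ENNReal.ofReal z
      = ∫⁻ z in E, ENNReal.ofReal (-z) := by
    have := hmp.setLIntegral_comp_preimage_emb hemb (fun y => ENNReal.ofReal (-y)) E
    simpa using this
  rw [← hvol]
  refine bathtub_pos _ (hE.preimage hmp.measurable) ?_ A (by rw [hint]; exact h)
  intro z hz
  have := hsub _ hz
  simpa using this

lemma level_pos (s : ℝ → ℝ) (hm : Measurable s) (I a : ℝ) (ha : 0 < a)
    (hI : ∫⁻ z in Set.Ioi 0, ENNReal.ofReal (s z * z) ≤ ENNReal.ofReal I) :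
    volume {z | 0 < z ∧ a < s z} ≤ ENNReal.ofReal (2 * Real.sqrt (I / a)) := by
  have hEm : MeasurableSet {z : ℝ | 0 < z ∧ a < s z} := by
    have : {z : ℝ | 0 < z ∧ a < s z} = Set.Ioi 0 ∩ {z | a < s z} := by
      ext z; simp [Set.mem_setOf_eq, and_comm]
    rw [this]
    exact measurableSet_Ioi.inter (measurableSet_lt measurable_const hm)
  refine bathtub_pos _ hEm (fun z hz => hz.1) (I / a) ?_
  have key : (∫⁻ z in {z : ℝ | 0 < z ∧ a < s z}, ENNReal.ofReal z) * ENNReal.ofReal a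
      ≤ ENNReal.ofReal I := by
    calc (∫⁻ z in {z : ℝ | 0 < z ∧ a < s z}, ENNReal.ofReal z) * ENNReal.ofReal a
        = ∫⁻ z in {z : ℝ | 0 < z ∧ a < s z}, ENNReal.ofReal z * ENNReal.ofReal a :=
          (lintegral_mul_const _ (by measurability)).symm
      _ = ∫⁻ z in {z : ℝ | 0 < z ∧ a < s z}, ENNReal.ofReal (z * a) := by
          refine setLIntegral_congr_fun hEm (fun z hz => ?_)
          rw [ENNReal.ofReal_mul (le_of_lt hz.1)]
      _ ≤ ∫⁻ z in {z : ℝ | 0 < z ∧ a < s z}, ENNReal.ofReal (s z * z) := by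
          refine setLIntegral_mono (by measurability) fun z hz => ?_
          refine ENNReal.ofReal_le_ofReal ?_
          nlinarith [hz.1, hz.2]
      _ ≤ ∫⁻ z in Set.Ioi 0, ENNReal.ofReal (s z * z) :=
          lintegral_mono_set (fun z hz => hz.1)
      _ ≤ ENNReal.ofReal I := hI
  have := (ENNReal.le_div_iff_mul_le (Or.inl (by simp [ha])) (Or.inl (by simp))).2 key
  rwa [← ENNReal.ofReal_div_of_pos ha] at this

lemma level_neg (s : ℝ → ℝ) (hm : Measurable s) (I b : ℝ) (hb : 0 < b)
    (hI : ∫⁻ z in Set.Iio 0, ENNReal.ofReal ((1 - s z) * (-z)) ≤ ENNReal.ofReal I) :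
    volume {z | z < 0 ∧ b < 1 - s z} ≤ ENNReal.ofReal (2 * Real.sqrt (I / b)) := by
  have hEm : MeasurableSet {z : ℝ | z < 0 ∧ b < 1 - s z} := by
    have : {z : ℝ | z < 0 ∧ b < 1 - s z} = Set.Iio 0 ∩ {z | b < 1 - s z} := by
      ext z; simp [Set.mem_setOf_eq, and_comm]
    rw [this]
    exact measurableSet_Iio.inter
      (measurableSet_lt measurable_const (measurable_const.sub hm))
  refine bathtub_neg _ hEm (fun z hz => hz.1) (I / b) ?_
  have key : (∫⁻ z in {z : ℝ | z < 0 ∧ b < 1 - s z}, ENNReal.ofReal (-z)) * ENNReal.ofReal b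
      ≤ ENNReal.ofReal I := by
    calc (∫⁻ z in {z : ℝ | z < 0 ∧ b < 1 - s z}, ENNReal.ofReal (-z)) * ENNReal.ofReal b
        = ∫⁻ z in {z : ℝ | z < 0 ∧ b < 1 - s z}, ENNReal.ofReal (-z) * ENNReal.ofReal b :=
          (lintegral_mul_const _ (measurable_neg.ennreal_ofReal)).symm
      _ = ∫⁻ z in {z : ℝ | z < 0 ∧ b < 1 - s z}, ENNReal.ofReal ((-z) * b) := by
          refine setLIntegral_congr_fun hEm (fun z hz => ?_)
          rw [ENNReal.ofReal_mul (by linarith [hz.1])]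
      _ ≤ ∫⁻ z in {z : ℝ | z < 0 ∧ b < 1 - s z}, ENNReal.ofReal ((1 - s z) * (-z)) := by
          refine setLIntegral_mono (by measurability) fun z hz => ?_
          refine ENNReal.ofReal_le_ofReal ?_
          nlinarith [hz.1, hz.2]
      _ ≤ ∫⁻ z in Set.Iio 0, ENNReal.ofReal ((1 - s z) * (-z)) :=
          lintegral_mono_set (fun z hz => hz.1)
      _ ≤ ENNReal.ofReal I := hI
  have := (ENNReal.le_div_iff_mul_le (Or.inl (by simp [hb])) (Or.inl (by simp))).2 key
  rwa [← ENNReal.ofReal_div_of_pos hb] at this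

lemma sqrt_div_rpow_helper (I t c α : ℝ) (hI : 0 ≤ I) (ht : 0 < t) (hc : 0 < c) (hα : 0 < α) :
    Real.sqrt (I / ((t / c) ^ (1 / α))) =
      Real.sqrt I * (c ^ (1 / (2 * α)) * t ^ (-(1 / (2 * α)))) := by
  rw [Real.sqrt_div hI, Real.sqrt_eq_rpow ((t / c) ^ (1 / α)), ← Real.rpow_mul (by positivity)]
  have h1 : (1 / α) * (1 / 2) = 1 / (2 * α) := by field_simp
  rw [h1, Real.div_rpow ht.le hc.le, Real.rpow_neg ht.le]
  have h2 : (0:ℝ) < t ^ (1 / (2 * α)) := Real.rpow_pos_of_pos ht _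
  field_simp

/-- **Existence of an interpolation constant.** For bounded concave F with F(0) = F(1) = 0
satisfying the growth conditions F(s) ≤ C₁ s^α, F(s) ≤ C₂ (1−s)^α with α > 1/2, there is a
constant C (depending only on C₁, C₂, α and the sup norm bound M of F) such that every
profile s satisfies ∫_ℝ F(s) dz ≤ C (∫_ℝ (s − s₀) z dz)^{1/2}. -/
theorem interpolation_constant_exists
    (C₁ C₂ α M : ℝ) (hC₁ : 0 < C₁) (hC₂ : 0 < C₂) (hα : 1/2 < α) :
    ∃ C : ℝ, ∀ F : ℝ → ℝ,
      ConcaveOn ℝ (Set.Icc 0 1) F → F 0 = 0 → F 1 = 0 →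
      (∀ x ∈ Set.Icc (0:ℝ) 1, |F x| ≤ M) →
      (∀ x ∈ Set.Icc (0:ℝ) 1, F x ≤ C₁ * x ^ α) →
      (∀ x ∈ Set.Icc (0:ℝ) 1, F x ≤ C₂ * (1 - x) ^ α) →
      ∀ s : ℝ → ℝ, IsProfile s →
        Integrable (fun z => (s z - stepProfile z) * z) volume →
        0 ≤ ∫ z : ℝ, (s z - stepProfile z) * z →
        (∫⁻ z : ℝ, ENNReal.ofReal (F (s z))) ≤
          ENNReal.ofReal (C * Real.sqrt (∫ z : ℝ, (s z - stepProfile z) * z)) := by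
  have hαpos : 0 < α := by linarith
  have hβpos : 0 < 1 / (2 * α) := by positivity
  have hβlt : 1 / (2 * α) < 1 := by
    rw [div_lt_one (by linarith)]; linarith
  have hm0 : 0 < min C₁ C₂ := lt_min hC₁ hC₂
  set J := ∫ t in Set.Ioc (0:ℝ) (min C₁ C₂), t ^ (-(1 / (2 * α))) with hJ
  have hJint : IntegrableOn (fun t : ℝ => t ^ (-(1 / (2 * α)))) (Set.Ioc 0 (min C₁ C₂))
      volume := by
    have h := intervalIntegral.intervalIntegrable_rpow' (show (-1:ℝ) < -(1 / (2 * α)) by linarith)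
      (a := 0) (b := min C₁ C₂)
    exact (intervalIntegrable_iff_integrableOn_Ioc_of_le hm0.le).1 h
  refine ⟨2 * (C₁ ^ (1 / (2 * α)) + C₂ ^ (1 / (2 * α))) * J, ?_⟩
  intro F hconc hF0 hF1 hM h1 h2 s hs hint hI0
  set I := ∫ z : ℝ, (s z - stepProfile z) * z with hIdef
  have hnn : ∀ z, 0 ≤ (s z - stepProfile z) * z := by
    intro z
    obtain ⟨hz0, hz1⟩ := hs.mem_Icc z
    by_cases hz : z < 0
    · simp only [stepProfile, if_pos hz]; nlinarith
    · simp only [stepProfile, if_neg hz]; push_neg at hz; nlinarith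
  have hofReal : ENNReal.ofReal I = ∫⁻ z, ENNReal.ofReal ((s z - stepProfile z) * z) :=
    ofReal_integral_eq_lintegral_ofReal hint (ae_of_all _ hnn)
  have hIpos : ∫⁻ z in Set.Ioi 0, ENNReal.ofReal (s z * z) ≤ ENNReal.ofReal I := by
    rw [hofReal]
    calc ∫⁻ z in Set.Ioi 0, ENNReal.ofReal (s z * z)
        = ∫⁻ z in Set.Ioi 0, ENNReal.ofReal ((s z - stepProfile z) * z) := by
          refine setLIntegral_congr_fun measurableSet_Ioi (fun z hz => ?_)
          have : ¬ z < 0 := not_lt.2 (le_of_lt hz)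
          simp [stepProfile, this]
      _ ≤ ∫⁻ z, ENNReal.ofReal ((s z - stepProfile z) * z) := setLIntegral_le_lintegral _ _
  have hIneg : ∫⁻ z in Set.Iio 0, ENNReal.ofReal ((1 - s z) * (-z)) ≤ ENNReal.ofReal I := by
    rw [hofReal]
    calc ∫⁻ z in Set.Iio 0, ENNReal.ofReal ((1 - s z) * (-z))
        = ∫⁻ z in Set.Iio 0, ENNReal.ofReal ((s z - stepProfile z) * z) := by
          refine setLIntegral_congr_fun measurableSet_Iio (fun z hz => ?_)
          have : z < 0 := hz
          simp only [stepProfile, if_pos this]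
          ring_nf
      _ ≤ ∫⁻ z, ENNReal.ofReal ((s z - stepProfile z) * z) := setLIntegral_le_lintegral _ _
  have hrc : Continuous fun x : ℝ => x ^ α :=
    continuous_id.rpow_const (fun x => Or.inr hαpos.le)
  have hfm : Measurable fun z => min (C₁ * s z ^ α) (C₂ * (1 - s z) ^ α) :=
    (measurable_const.mul (hrc.measurable.comp hs.meas)).min
      (measurable_const.mul (hrc.measurable.comp (measurable_const.sub hs.meas)))
  have hfnn : ∀ z, 0 ≤ min (C₁ * s z ^ α) (C₂ * (1 - s z) ^ α) := fun z =>
    le_min (mul_nonneg hC₁.le (Real.rpow_nonneg (hs.mem_Icc z).1 _))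
      (mul_nonneg hC₂.le (Real.rpow_nonneg (by linarith [(hs.mem_Icc z).2]) _))
  calc ∫⁻ z, ENNReal.ofReal (F (s z))
      ≤ ∫⁻ z, ENNReal.ofReal (min (C₁ * s z ^ α) (C₂ * (1 - s z) ^ α)) :=
        lintegral_mono fun z => ENNReal.ofReal_le_ofReal
          (le_min (h1 _ (hs.mem_Icc z)) (h2 _ (hs.mem_Icc z)))
    _ = ∫⁻ t in Set.Ioi 0, volume {z | t < min (C₁ * s z ^ α) (C₂ * (1 - s z) ^ α)} :=
        lintegral_eq_lintegral_meas_lt volume (ae_of_all _ hfnn) hfm.aemeasurable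
    _ = (∫⁻ t in Set.Ioc 0 (min C₁ C₂),
            volume {z | t < min (C₁ * s z ^ α) (C₂ * (1 - s z) ^ α)})
        + ∫⁻ t in Set.Ioi (min C₁ C₂),
            volume {z | t < min (C₁ * s z ^ α) (C₂ * (1 - s z) ^ α)} := by
        rw [← Set.Ioc_union_Ioi_eq_Ioi hm0.le,
          lintegral_union measurableSet_Ioi Set.Ioc_disjoint_Ioi_same]
    _ = ∫⁻ t in Set.Ioc 0 (min C₁ C₂),
          volume {z | t < min (C₁ * s z ^ α) (C₂ * (1 - s z) ^ α)} := by
        have hzero : ∀ t ∈ Set.Ioi (min C₁ C₂),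
            volume {z | t < min (C₁ * s z ^ α) (C₂ * (1 - s z) ^ α)} = (0:ENNReal) := by
          intro t ht
          have : {z | t < min (C₁ * s z ^ α) (C₂ * (1 - s z) ^ α)} = (∅ : Set ℝ) := by
            ext z
            obtain ⟨hz0, hz1⟩ := hs.mem_Icc z
            simp only [Set.mem_setOf_eq, Set.mem_empty_iff_false, iff_false, not_lt, lt_min_iff]
            have e1 : C₁ * s z ^ α ≤ C₁ :=
              mul_le_of_le_one_right hC₁.le (Real.rpow_le_one hz0 hz1 hαpos.le)
            have e2 : C₂ * (1 - s z) ^ α ≤ C₂ :=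
              mul_le_of_le_one_right hC₂.le
                (Real.rpow_le_one (by linarith) (by linarith) hαpos.le)
            have : min (C₁ * s z ^ α) (C₂ * (1 - s z) ^ α) ≤ min C₁ C₂ :=
              min_le_min e1 e2
            have ht' : min C₁ C₂ < t := ht
            exact fun hc => absurd (lt_of_lt_of_le (lt_min hc.1 hc.2) this) (not_lt.2 ht'.le)
          rw [this]; simp
        rw [setLIntegral_congr_fun measurableSet_Ioi hzero]
        simp
    _ ≤ ∫⁻ t in Set.Ioc 0 (min C₁ C₂),
          ENNReal.ofReal ((2 * (C₁ ^ (1 / (2 * α)) + C₂ ^ (1 / (2 * α))) * Real.sqrt I)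
            * t ^ (-(1 / (2 * α)))) := by
        refine setLIntegral_mono' measurableSet_Ioc fun t ht => ?_
        obtain ⟨ht0, htm⟩ := ht
        have ha : (0:ℝ) < (t / C₁) ^ (1 / α) := Real.rpow_pos_of_pos (div_pos ht0 hC₁) _
        have hb : (0:ℝ) < (t / C₂) ^ (1 / α) := Real.rpow_pos_of_pos (div_pos ht0 hC₂) _
        have hsub : {z | t < min (C₁ * s z ^ α) (C₂ * (1 - s z) ^ α)}
            ⊆ {z | 0 < z ∧ (t / C₁) ^ (1 / α) < s z}
              ∪ ({z | z < 0 ∧ (t / C₂) ^ (1 / α) < 1 - s z} ∪ {(0:ℝ)}) := by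
          intro z hz
          simp only [Set.mem_setOf_eq, lt_min_iff] at hz
          obtain ⟨hz1, hz2⟩ := hz
          obtain ⟨hs0, hs1⟩ := hs.mem_Icc z
          rcases lt_trichotomy z 0 with hneg | hzero | hpos
          · refine Or.inr (Or.inl ⟨hneg, ?_⟩)
            have h1s : (0:ℝ) ≤ 1 - s z := by linarith
            have hd : t / C₂ < (1 - s z) ^ α := (div_lt_iff₀ hC₂).2 (by linarith [hz2])
            calc (t / C₂) ^ (1 / α) < ((1 - s z) ^ α) ^ (1 / α) :=
                  Real.rpow_lt_rpow (by positivity) hd (by positivity)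
              _ = 1 - s z := by
                  rw [← Real.rpow_mul h1s, mul_one_div_cancel (ne_of_gt hαpos),
                    Real.rpow_one]
          · exact Or.inr (Or.inr (by simp [hzero]))
          · refine Or.inl ⟨hpos, ?_⟩
            have hd : t / C₁ < s z ^ α := (div_lt_iff₀ hC₁).2 (by linarith [hz1])
            calc (t / C₁) ^ (1 / α) < (s z ^ α) ^ (1 / α) :=
                  Real.rpow_lt_rpow (by positivity) hd (by positivity)
              _ = s z := by
                  rw [← Real.rpow_mul hs0, mul_one_div_cancel (ne_of_gt hαpos),
                    Real.rpow_one]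
        calc volume {z | t < min (C₁ * s z ^ α) (C₂ * (1 - s z) ^ α)}
            ≤ volume ({z | 0 < z ∧ (t / C₁) ^ (1 / α) < s z}
                ∪ ({z | z < 0 ∧ (t / C₂) ^ (1 / α) < 1 - s z} ∪ {(0:ℝ)})) :=
              measure_mono hsub
          _ ≤ volume {z | 0 < z ∧ (t / C₁) ^ (1 / α) < s z}
              + volume ({z | z < 0 ∧ (t / C₂) ^ (1 / α) < 1 - s z} ∪ {(0:ℝ)}) :=
              measure_union_le _ _
          _ ≤ volume {z | 0 < z ∧ (t / C₁) ^ (1 / α) < s z}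
              + (volume {z | z < 0 ∧ (t / C₂) ^ (1 / α) < 1 - s z} + volume ({(0:ℝ)} : Set ℝ)) :=
              add_le_add le_rfl (measure_union_le _ _)
          _ = volume {z | 0 < z ∧ (t / C₁) ^ (1 / α) < s z}
              + volume {z | z < 0 ∧ (t / C₂) ^ (1 / α) < 1 - s z} := by
              rw [Real.volume_singleton, add_zero]
          _ ≤ ENNReal.ofReal (2 * Real.sqrt (I / (t / C₁) ^ (1 / α)))
              + ENNReal.ofReal (2 * Real.sqrt (I / (t / C₂) ^ (1 / α))) :=
              add_le_add (level_pos s hs.meas I _ ha hIpos) (level_neg s hs.meas I _ hb hIneg)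
          _ = ENNReal.ofReal (2 * Real.sqrt (I / (t / C₁) ^ (1 / α))
              + 2 * Real.sqrt (I / (t / C₂) ^ (1 / α))) :=
              (ENNReal.ofReal_add (by positivity) (by positivity)).symm
          _ ≤ ENNReal.ofReal ((2 * (C₁ ^ (1 / (2 * α)) + C₂ ^ (1 / (2 * α))) * Real.sqrt I)
              * t ^ (-(1 / (2 * α)))) := by
              refine ENNReal.ofReal_le_ofReal (le_of_eq ?_)
              rw [sqrt_div_rpow_helper I t C₁ α hI0 ht0 hC₁ hαpos,
                sqrt_div_rpow_helper I t C₂ α hI0 ht0 hC₂ hαpos]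
              ring
    _ = ENNReal.ofReal (2 * (C₁ ^ (1 / (2 * α)) + C₂ ^ (1 / (2 * α))) * Real.sqrt I)
        * ∫⁻ t in Set.Ioc 0 (min C₁ C₂), ENNReal.ofReal (t ^ (-(1 / (2 * α)))) := by
        rw [← lintegral_const_mul' _ _ ENNReal.ofReal_ne_top]
        refine setLIntegral_congr_fun measurableSet_Ioc (fun t ht => ?_)
        rw [ENNReal.ofReal_mul (by positivity)]
    _ = ENNReal.ofReal (2 * (C₁ ^ (1 / (2 * α)) + C₂ ^ (1 / (2 * α))) * Real.sqrt I)
        * ENNReal.ofReal J := by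
        congr 1
        rw [hJ]
        exact (ofReal_integral_eq_lintegral_ofReal hJint
          ((ae_restrict_iff' measurableSet_Ioc).2
            (ae_of_all _ fun t ht => Real.rpow_nonneg ht.1.le _))).symm
    _ = ENNReal.ofReal (2 * (C₁ ^ (1 / (2 * α)) + C₂ ^ (1 / (2 * α))) * J * Real.sqrt I) := by
        rw [← ENNReal.ofReal_mul (by positivity)]
        ring_nf
end
end

section
/- Monotonization lemma: let F : [0,1] → [0,∞) be continuous and strictly concave with F(0) = F(1) = 0, and let ζ ∈ (0,1) be its unique maximizer. Let s be a profile that is non-increasing on (−∞, 0) and non-increasing on (0, +∞), and define its monotonization s_monot(z) = max(s(z), ζ) for z < 0 and s_monot(z) = min(s(z), ζ) for z > 0. Then ∫_ℝ F(s(z)) dz ≤ ∫_ℝ F(s_monot(z)) dz, and ∫_ℝ (s_monot(z) − s₀(z)) z dz ≤ ∫_ℝ (s(z) − s₀(z)) z dz. -/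
/-!
Both inequalities hold pointwise. Since `F` is maximal at `ζ`, replacing `s z` by `max (s z) ζ`
or `min (s z) ζ` moves it towards `ζ` and cannot decrease `F`; and the monotonization is `≥ s`
where `z < 0` and `≤ s` where `z ≥ 0`, so multiplying the difference by `z` gives a nonpositive
quantity.
-/

open MeasureTheory Filter Real

noncomputable section

def monotonization (s : ℝ → ℝ) (ζ : ℝ) (z : ℝ) : ℝ :=
  if z < 0 then max (s z) ζ else min (s z) ζ

section MaxOn

variable {α β : Type*} [LinearOrder α] [Preorder β] {f : α → β} {S : Set α} {a x : α}

theorem apply_le_apply_max_of_forall_le (hmax : ∀ y ∈ S, f y ≤ f a) (hx : x ∈ S) :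
    f x ≤ f (max x a) := by
  rcases le_total x a with h | h
  · rw [max_eq_right h]; exact hmax x hx
  · rw [max_eq_left h]

theorem apply_le_apply_min_of_forall_le (hmax : ∀ y ∈ S, f y ≤ f a) (hx : x ∈ S) :
    f x ≤ f (min x a) := by
  rcases le_total x a with h | h
  · rw [min_eq_left h]
  · rw [min_eq_right h]; exact hmax x hx

end MaxOn

theorem apply_le_apply_monotonization {F s : ℝ → ℝ} {S : Set ℝ} {ζ : ℝ}
    (hmax : ∀ x ∈ S, F x ≤ F ζ) (hs : ∀ z, s z ∈ S) (z : ℝ) :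
    F (s z) ≤ F (monotonization s ζ z) := by
  unfold monotonization
  split_ifs
  · exact apply_le_apply_max_of_forall_le hmax (hs z)
  · exact apply_le_apply_min_of_forall_le hmax (hs z)

theorem monotonization_sub_stepProfile_mul_le (s : ℝ → ℝ) (ζ z : ℝ) :
    (monotonization s ζ z - stepProfile z) * z ≤ (s z - stepProfile z) * z := by
  unfold monotonization
  split_ifs with hz
  · exact mul_le_mul_of_nonpos_right (by gcongr; exact le_max_left _ _) hz.le
  · exact mul_le_mul_of_nonneg_right (by gcongr; exact min_le_left _ _) (not_lt.mp hz)

theorem monotonization_lemma_general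
    (F : ℝ → ℝ) (ζ : ℝ)
    (hζmax : ∀ x ∈ Set.Icc (0:ℝ) 1, F x ≤ F ζ)
    (s : ℝ → ℝ) (hs : IsProfile s)
    (smonot : ℝ → ℝ)
    (hsmonot : ∀ z : ℝ, smonot z = if z < 0 then max (s z) ζ else min (s z) ζ)
    (hint_s : Integrable (fun z => (s z - stepProfile z) * z) volume)
    (hint_m : Integrable (fun z => (smonot z - stepProfile z) * z) volume) :
    (∫⁻ z : ℝ, ENNReal.ofReal (F (s z))) ≤ (∫⁻ z : ℝ, ENNReal.ofReal (F (smonot z)))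
    ∧ (∫ z : ℝ, (smonot z - stepProfile z) * z) ≤ ∫ z : ℝ, (s z - stepProfile z) * z := by
  obtain rfl : smonot = monotonization s ζ := funext hsmonot
  exact ⟨lintegral_mono fun z =>
      ENNReal.ofReal_le_ofReal (apply_le_apply_monotonization hζmax hs.mem_Icc z),
    integral_mono hint_m hint_s (monotonization_sub_stepProfile_mul_le s ζ)⟩

/-- **Monotonization lemma.** Let F : [0,1] → [0,∞) be continuous and strictly concave with
F(0) = F(1) = 0 and unique maximizer ζ ∈ (0,1). If s is a profile which is non-increasing
on (−∞,0) and on (0,∞), and s_monot(z) = max(s(z), ζ) for z < 0, min(s(z), ζ) for z > 0,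
then ∫ F(s) dz ≤ ∫ F(s_monot) dz and ∫ (s_monot − s₀) z dz ≤ ∫ (s − s₀) z dz. -/
theorem monotonization_lemma
    (F : ℝ → ℝ) (hFcont : ContinuousOn F (Set.Icc 0 1))
    (hFconc : StrictConcaveOn ℝ (Set.Icc 0 1) F)
    (hF0 : F 0 = 0) (hF1 : F 1 = 0)
    (hFnn : ∀ x ∈ Set.Icc (0:ℝ) 1, 0 ≤ F x)
    (ζ : ℝ) (hζ : ζ ∈ Set.Ioo (0:ℝ) 1)
    (hζmax : ∀ x ∈ Set.Icc (0:ℝ) 1, F x ≤ F ζ)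
    (hζuniq : ∀ x ∈ Set.Icc (0:ℝ) 1, F x = F ζ → x = ζ)
    (s : ℝ → ℝ) (hs : IsProfile s)
    (hanti₁ : AntitoneOn s (Set.Iio 0)) (hanti₂ : AntitoneOn s (Set.Ioi 0))
    (smonot : ℝ → ℝ)
    (hsmonot : ∀ z : ℝ, smonot z = if z < 0 then max (s z) ζ else min (s z) ζ)
    (hint_s : Integrable (fun z => (s z - stepProfile z) * z) volume)
    (hint_m : Integrable (fun z => (smonot z - stepProfile z) * z) volume) :
    (∫⁻ z : ℝ, ENNReal.ofReal (F (s z))) ≤ (∫⁻ z : ℝ, ENNReal.ofReal (F (smonot z)))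
    ∧ (∫ z : ℝ, (smonot z - stepProfile z) * z) ≤ ∫ z : ℝ, (s z - stepProfile z) * z :=
  monotonization_lemma_general F ζ hζmax s hs smonot hsmonot hint_s hint_m
end
end

section
/- Sharp constant for the Rayleigh–Taylor flux: for ρ₊ > ρ₋ > 0 and the flux function F(s) = (ρ₊ − ρ₋) s(1 − s)/(ρ₊ s + ρ₋(1 − s)) on [0,1], one has 2 ∫₀¹ (F'(s))² ds = (2/3) (ρ₊ − ρ₋)² / (ρ₊ ρ₋); equivalently the sharp interpolation constant is 𝒞(F) = ( (2/3) (ρ₊ − ρ₋)² / (ρ₊ ρ₋) )^{1/2}, where 𝒞(F) = (2 ∫₀¹ (F'(s))² ds)^{1/2}. -/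
open MeasureTheory Real

noncomputable section

/-- **Sharp constant for the Rayleigh–Taylor flux.** For ρ₊ > ρ₋ > 0 and the flux function
F(s) = (ρ₊ − ρ₋) s(1−s)/(ρ₊ s + ρ₋(1−s)), one has 2∫₀¹ (F')² ds = (2/3)(ρ₊ − ρ₋)²/(ρ₊ ρ₋);
equivalently the sharp interpolation constant is 𝒞(F) = ((2/3)(ρ₊ − ρ₋)²/(ρ₊ ρ₋))^{1/2}. -/
theorem sharp_constant_RT_flux
    (ρm ρp : ℝ) (hρm : 0 < ρm) (hρ : ρm < ρp)
    (F : ℝ → ℝ)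
    (hF : ∀ x : ℝ, F x = (ρp - ρm) * (x * (1 - x)) / (ρp * x + ρm * (1 - x))) :
    2 * (∫ x in Set.Ioo (0:ℝ) 1, (deriv F x) ^ 2) = 2/3 * (ρp - ρm) ^ 2 / (ρp * ρm)
    ∧ Real.sqrt (2 * ∫ x in Set.Ioo (0:ℝ) 1, (deriv F x) ^ 2) =
        Real.sqrt (2/3 * (ρp - ρm) ^ 2 / (ρp * ρm)) := by
  have hρp : (0:ℝ) < ρp := hρm.trans hρ
  have hap : (0:ℝ) < ρp - ρm := sub_pos.mpr hρ
  set a : ℝ := ρp - ρm with ha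
  -- positivity of denominator on [0,1]
  have hd : ∀ x ∈ Set.Icc (0:ℝ) 1, (0:ℝ) < ρm + a * x := by
    intro x hx
    have := hx.1
    nlinarith
  -- derivative of F on [0,1]
  have hF' : ∀ x ∈ Set.Icc (0:ℝ) 1,
      HasDerivAt F (ρp * ρm / (ρm + a * x) ^ 2 - 1) x := by
    intro x hx
    have hdx : (ρm + a * x) ≠ 0 := (hd x hx).ne'
    have hDx : (ρp * x + ρm * (1 - x)) ≠ 0 := by
      intro h; apply hdx; rw [← h]; ring
    have hnum : HasDerivAt (fun y : ℝ => (ρp - ρm) * (y * (1 - y)))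
        ((ρp - ρm) * (1 - 2 * x)) x := by
      have h := (((hasDerivAt_id x).mul
        ((hasDerivAt_const x (1:ℝ)).sub (hasDerivAt_id x))).const_mul (ρp - ρm))
      exact h.congr_deriv (by simp only [Pi.sub_apply, id_eq]; ring)
    have hden : HasDerivAt (fun y : ℝ => ρp * y + ρm * (1 - y)) (ρp - ρm) x := by
      have h := (((hasDerivAt_id x).const_mul ρp).add
        (((hasDerivAt_const x (1:ℝ)).sub (hasDerivAt_id x)).const_mul ρm))
      exact h.congr_deriv (by ring)
    have h := hnum.div hden hDx
    have hFe : F = fun y => (ρp - ρm) * (y * (1 - y)) / (ρp * y + ρm * (1 - y)) :=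
      funext hF
    rw [hFe]
    refine h.congr_deriv ?_
    rw [show ρm + a * x = ρp * x + ρm * (1 - x) by rw [ha]; ring]
    field_simp
    ring
  -- explicit integrand
  set g : ℝ → ℝ := fun x => (ρp * ρm / (ρm + a * x) ^ 2 - 1) ^ 2 with hg
  have heq : (∫ x in Set.Ioo (0:ℝ) 1, (deriv F x) ^ 2) = ∫ x in Set.Ioo (0:ℝ) 1, g x := by
    apply setIntegral_congr_fun measurableSet_Ioo
    intro x hx
    have hx' : x ∈ Set.Icc (0:ℝ) 1 := ⟨hx.1.le, hx.2.le⟩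
    simp only [hg]
    rw [(hF' x hx').deriv]
  -- antiderivative
  set G : ℝ → ℝ := fun x =>
    -(ρp * ρm) ^ 2 / (3 * a * (ρm + a * x) ^ 3) + 2 * (ρp * ρm) / (a * (ρm + a * x)) + x
    with hG
  have hGd : ∀ x ∈ Set.Icc (0:ℝ) 1, HasDerivAt G (g x) x := by
    intro x hx
    have hdx : (0:ℝ) < ρm + a * x := hd x hx
    have hdx' : (ρm + a * x) ≠ 0 := hdx.ne'
    have hlin : HasDerivAt (fun y : ℝ => ρm + a * y) a x := by
      have h := ((hasDerivAt_id x).const_mul a).const_add ρm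
      exact h.congr_deriv (by ring)
    have h3 : HasDerivAt (fun y : ℝ => 3 * a * (ρm + a * y) ^ 3)
        (3 * a * (3 * (ρm + a * x) ^ 2 * a)) x := by
      exact (hlin.pow 3).const_mul (3 * a)
    have h1 : HasDerivAt (fun y : ℝ => a * (ρm + a * y)) (a * a) x :=
      hlin.const_mul a
    have hne3 : 3 * a * (ρm + a * x) ^ 3 ≠ 0 := by positivity
    have hne1 : a * (ρm + a * x) ≠ 0 := by positivity
    have hA := (hasDerivAt_const x (-(ρp * ρm) ^ 2)).div h3 hne3
    have hB := (hasDerivAt_const x (2 * (ρp * ρm))).div h1 hne1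
    have h := (hA.add hB).add (hasDerivAt_id x)
    refine h.congr_deriv ?_
    rw [hg]
    field_simp
    ring
  -- integrability
  have hgc : ContinuousOn g (Set.uIcc (0:ℝ) 1) := by
    rw [Set.uIcc_of_le (by norm_num : (0:ℝ) ≤ 1)]
    apply ContinuousOn.pow
    apply ContinuousOn.sub _ continuousOn_const
    apply ContinuousOn.div continuousOn_const
    · exact (ContinuousOn.pow (by fun_prop) 2)
    · intro x hx
      exact pow_ne_zero 2 (hd x hx).ne'
  have hint : IntervalIntegrable g volume 0 1 := hgc.intervalIntegrable
  have hFTC : (∫ x in (0:ℝ)..1, g x) = G 1 - G 0 := by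
    apply intervalIntegral.integral_eq_sub_of_hasDerivAt
    · intro x hx
      rw [Set.uIcc_of_le (by norm_num : (0:ℝ) ≤ 1)] at hx
      exact hGd x hx
    · exact hint
  have hioo : (∫ x in Set.Ioo (0:ℝ) 1, g x) = ∫ x in (0:ℝ)..1, g x := by
    rw [intervalIntegral.integral_of_le (by norm_num : (0:ℝ) ≤ 1),
      ← MeasureTheory.integral_Ioc_eq_integral_Ioo]
  have hval : G 1 - G 0 = 1/3 * (ρp - ρm) ^ 2 / (ρp * ρm) := by
    simp only [hG, ha]
    have h1 : ρm + (ρp - ρm) * 1 = ρp := by ring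
    have h0 : ρm + (ρp - ρm) * 0 = ρm := by ring
    rw [h1, h0]
    have hne : ρp - ρm ≠ 0 := by linarith
    field_simp
    ring
  have key : 2 * (∫ x in Set.Ioo (0:ℝ) 1, (deriv F x) ^ 2)
      = 2/3 * (ρp - ρm) ^ 2 / (ρp * ρm) := by
    rw [heq, hioo, hFTC, hval]; ring
  exact ⟨key, by rw [key]⟩
end
end
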